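/- arXiv:2008.05595 — 5 statements merged into one kernel-verified Lean document; each statement's English description precedes it below -/
import Mathlib

section
/- Let p be a nonconstant polynomial in n real variables of degree d, \alpha a multi-index admissible with respect to p, and C the constant (depending only on n) from the volume bound vol(V_\delta(p) \cap \Delta) \leq C\,\delta^{1/|\alpha|} for \delta < |p_\alpha|/(4d)^{|\alpha|}. Then for every \epsilon > 0 with \epsilon < |p_\alpha|^{1/|\alpha|}\, C/(4d), one has \Lambda_{|p|}(\epsilon) \geq (C^{-|\alpha|}/(1+|\alpha|))\, \epsilon^{|\alpha|+1}. -/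
open MvPolynomial MeasureTheory
open scoped ENNReal

/-- A multi-index `α` is *admissible* with respect to the polynomial `p` if `p_α ≠ 0` and
there is a permutation `σ` of the variables such that every other multi-index `β` appearing
in `p` is lexicographically smaller than `α` in the order of variables given by `σ`. -/
def Admissible {n : ℕ} (p : MvPolynomial (Fin n) ℝ) (α : Fin n →₀ ℕ) : Prop :=
  coeff α p ≠ 0 ∧ ∃ σ : Equiv.Perm (Fin n),
    ∀ β : Fin n →₀ ℕ, coeff β p ≠ 0 → β ≠ α →
      ∃ j : Fin n, (∀ k : Fin n, k < j → α (σ k) = β (σ k)) ∧ β (σ j) < α (σ j)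

/-- The cube `[-r, r]^n` in `ℝ^n`. -/
def cube (n : ℕ) (r : ℝ) : Set (Fin n → ℝ) := Set.univ.pi fun _ => Set.Icc (-r) r

/-- The sublevel set `V_δ(p) = {x : |p(x)| < δ}`. -/
def sublevel {n : ℕ} (p : MvPolynomial (Fin n) ℝ) (δ : ℝ) : Set (Fin n → ℝ) :=
  {x | |eval x p| < δ}

/-- `Λ_f(ε)`: the infimum of `∫_Δ f g dλ` over measurable `g` with `0 ≤ g ≤ 1` λ-a.e. and
`∫_Δ g dλ ≥ ε`, where `Δ = [-1,1]^n` and `λ` is Lebesgue measure restricted to `Δ`.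
(The infimum over the empty set is `∞`.) -/
noncomputable def Lam (n : ℕ) (f : (Fin n → ℝ) → ℝ) (ε : ℝ) : ℝ≥0∞ :=
  sInf ((fun g => ENNReal.ofReal (∫ x in cube n 1, f x * g x)) ''
    {g : (Fin n → ℝ) → ℝ | Measurable g ∧
      (∀ᵐ x ∂(volume.restrict (cube n 1)), 0 ≤ g x ∧ g x ≤ 1) ∧
      ε ≤ ∫ x in cube n 1, g x})

/-- The sum of an admissible multi-index is at least `1` when the polynomial is nonconstant. -/
theorem one_le_sum_of_admissible {n : ℕ} {p : MvPolynomial (Fin n) ℝ} {d : ℕ}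
    (hpd : p.totalDegree = d) (hd : 0 < d) {α : Fin n →₀ ℕ} (hα : Admissible p α) :
    1 ≤ ∑ i, α i := by
  rw [Nat.one_le_iff_ne_zero]
  intro hm
  have hall : ∀ i ∈ Finset.univ, α i = 0 := Finset.sum_eq_zero_iff.mp hm
  have h0 : 0 < p.totalDegree := hpd ▸ hd
  rw [MvPolynomial.totalDegree, Finset.lt_sup_iff] at h0
  obtain ⟨β, hβs, hβ⟩ := h0
  rw [Finsupp.sum_fintype _ _ (fun _ => rfl)] at hβ
  have hβne : β ≠ α := by
    intro hh
    subst hh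
    rw [hm] at hβ
    exact lt_irrefl 0 hβ
  obtain ⟨σ, hσ⟩ := hα.2
  obtain ⟨j, _, hj⟩ := hσ β (MvPolynomial.mem_support_iff.mp hβs) hβne
  rw [hall (σ j) (Finset.mem_univ _)] at hj
  exact absurd hj (Nat.not_lt_zero _)

/-- The limiting form of the sublevel volume bound: the bound for strict sublevel sets
also controls the closed sublevel sets. -/
theorem restrict_closed_sublevel_le {n : ℕ} (p : MvPolynomial (Fin n) ℝ) (m : ℕ)
    (C : ℝ) (δ0 B : ℝ) (hδ0B : δ0 < B)
    (hC : ∀ δ : ℝ, 0 < δ → δ < B →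
      volume (sublevel p δ ∩ cube n 1) ≤ ENNReal.ofReal (C * δ ^ ((m:ℝ))⁻¹)) :
    ∀ t : ℝ, t ∈ Set.Ioo (0:ℝ) δ0 →
      (volume.restrict (cube n 1)) {x | |eval x p| ≤ t} ≤
        ENNReal.ofReal (C * t ^ ((m:ℝ))⁻¹) := by
  intro t ht
  have hf_cont : Continuous fun x => |eval x p| := continuous_abs.comp (p.continuous_eval)
  have hmle : MeasurableSet {x | |eval x p| ≤ t} :=
    (isClosed_le hf_cont continuous_const).measurableSet
  have h1 : ∀ s ∈ Set.Ioo t δ0,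
      (volume.restrict (cube n 1)) {x | |eval x p| ≤ t} ≤
        ENNReal.ofReal (C * s ^ ((m:ℝ))⁻¹) := by
    intro s hs
    rw [Measure.restrict_apply hmle]
    calc volume ({x | |eval x p| ≤ t} ∩ cube n 1) ≤ volume (sublevel p s ∩ cube n 1) :=
        measure_mono (Set.inter_subset_inter_left _ fun x hx => lt_of_le_of_lt hx hs.1)
      _ ≤ _ := hC s (ht.1.trans hs.1) (hs.2.trans hδ0B)
  refine ge_of_tendsto (x := nhdsWithin t (Set.Ioi t))
    (f := fun s => ENNReal.ofReal (C * s ^ ((m:ℝ))⁻¹)) ?_ ?_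
  · exact ((ENNReal.continuous_ofReal.tendsto _).comp
      ((continuousAt_const.mul
        (Real.continuousAt_rpow_const t _ (Or.inr (by positivity)))).tendsto.mono_left
        nhdsWithin_le_nhds))
  · filter_upwards [Ioo_mem_nhdsGT_of_mem ⟨le_refl t, ht.2⟩] with s hs using h1 s hs

/-- The computation of the elementary real integral appearing in the lower bound. -/
theorem integral_lower_bound_eq (m : ℕ) (hm1 : 1 ≤ m) (C ε : ℝ) (hC0 : 0 < C) (hε : 0 < ε) :
    ∫ t in Set.Ioo (0:ℝ) ((ε/C)^m), (ε - C * t ^ ((m:ℝ))⁻¹) =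
      (C ^ m)⁻¹ / (1 + (m:ℝ)) * ε ^ (m + 1) := by
  set δ0 : ℝ := (ε/C)^m with hδ0
  have hδ0pos : 0 < δ0 := pow_pos (div_pos hε hC0) m
  have hmR : (0:ℝ) < (m:ℝ) := by exact_mod_cast hm1
  have hr : (0:ℝ) < ((m:ℝ))⁻¹ := by positivity
  have hδ0r : δ0 ^ ((m:ℝ))⁻¹ = ε / C := by
    rw [hδ0, ← Real.rpow_natCast (ε/C) m, ← Real.rpow_mul (div_pos hε hC0).le]
    rw [mul_inv_cancel₀ hmR.ne', Real.rpow_one]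
  rw [← integral_Ioc_eq_integral_Ioo, ← intervalIntegral.integral_of_le hδ0pos.le]
  have hi1 : IntervalIntegrable (fun t : ℝ => ε) volume 0 δ0 := intervalIntegrable_const
  have hi2 : IntervalIntegrable (fun t : ℝ => C * t ^ ((m:ℝ))⁻¹) volume 0 δ0 :=
    (intervalIntegral.intervalIntegrable_rpow (Or.inl hr.le)).const_mul C
  rw [intervalIntegral.integral_sub hi1 hi2, intervalIntegral.integral_const,
    intervalIntegral.integral_const_mul, integral_rpow (Or.inl (by linarith))]
  rw [Real.zero_rpow (by positivity), Real.rpow_add hδ0pos, Real.rpow_one, hδ0r]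
  rw [smul_eq_mul, sub_zero, hδ0, div_pow ε C m]
  have hCm : (0:ℝ) < C ^ m := by positivity
  field_simp
  ring

/-- The core analytic estimate: for any admissible `g`, the layer-cake bound. -/
theorem lintegral_layercake_bound {n : ℕ} (p : MvPolynomial (Fin n) ℝ) (m : ℕ)
    (C : ℝ) (hC0 : 0 < C) (δ0 : ℝ)
    (keyμ : ∀ t : ℝ, t ∈ Set.Ioo (0:ℝ) δ0 →
      (volume.restrict (cube n 1)) {x | |eval x p| ≤ t} ≤ ENNReal.ofReal (C * t ^ ((m:ℝ))⁻¹))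
    (ε : ℝ) (hδ0r : δ0 ^ ((m:ℝ))⁻¹ = ε / C)
    (g : (Fin n → ℝ) → ℝ) (hgm : Measurable g)
    (hg01 : ∀ᵐ x ∂(volume.restrict (cube n 1)), 0 ≤ g x ∧ g x ≤ 1)
    (hgε : ε ≤ ∫ x in cube n 1, g x) :
    ENNReal.ofReal (∫ t in Set.Ioo (0:ℝ) δ0, (ε - C * t ^ ((m:ℝ))⁻¹)) ≤
      ENNReal.ofReal (∫ x in cube n 1, |eval x p| * g x) := by
  set μ := volume.restrict (cube n 1) with hμ
  set f : (Fin n → ℝ) → ℝ := fun x => |eval x p| with hf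
  have hf_cont : Continuous f := continuous_abs.comp (p.continuous_eval)
  have hcube_m : MeasurableSet (cube n 1) :=
    MeasurableSet.univ_pi fun _ => measurableSet_Icc
  have hcube_cpt : IsCompact (cube n 1) := isCompact_univ_pi fun _ => isCompact_Icc
  haveI : IsFiniteMeasure μ :=
    ⟨by rw [hμ, Measure.restrict_apply_univ]; exact hcube_cpt.measure_lt_top⟩
  have hf_int : Integrable f μ := hf_cont.continuousOn.integrableOn_compact hcube_cpt
  have hfg_int : Integrable (fun x => f x * g x) μ := by
    refine hf_int.mono' (hf_cont.aestronglyMeasurable.mul hgm.aestronglyMeasurable) ?_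
    filter_upwards [hg01] with x hx
    rw [norm_mul, Real.norm_eq_abs, Real.norm_eq_abs, abs_abs, abs_of_nonneg hx.1]
    exact mul_le_of_le_one_right (abs_nonneg _) hx.2
  set G : (Fin n → ℝ) → ℝ≥0∞ := fun x => ENNReal.ofReal (g x) with hG
  have hGm : Measurable G := hgm.ennreal_ofReal
  set ν := μ.withDensity G with hν
  have step1 : ENNReal.ofReal (∫ x in cube n 1, f x * g x) =
      ∫⁻ x, ENNReal.ofReal (f x) ∂ν := by
    rw [ofReal_integral_eq_lintegral_ofReal hfg_int]
    · rw [hν, lintegral_withDensity_eq_lintegral_mul μ hGm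
        (hf_cont.measurable.ennreal_ofReal)]
      refine lintegral_congr fun x => ?_
      simp only [Pi.mul_apply, hG]
      rw [ENNReal.ofReal_mul (abs_nonneg _), mul_comm]
    · filter_upwards [hg01] with x hx
      exact mul_nonneg (abs_nonneg _) hx.1
  have step2 : ∫⁻ x, ENNReal.ofReal (f x) ∂ν =
      ∫⁻ t in Set.Ioi (0:ℝ), ν {a | t < f a} := by
    exact lintegral_eq_lintegral_meas_lt ν (Filter.Eventually.of_forall fun x => abs_nonneg _)
      hf_cont.aemeasurable
  have hg_int : Integrable g μ := by
    refine Integrable.mono' (integrable_const 1) hgm.aestronglyMeasurable ?_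
    filter_upwards [hg01] with x hx
    rw [Real.norm_eq_abs, abs_of_nonneg hx.1]; exact hx.2
  have hg_nn : 0 ≤ᵐ[μ] g := by filter_upwards [hg01] with x hx using hx.1
  have htot : ENNReal.ofReal ε ≤ ∫⁻ x, G x ∂μ := by
    rw [hG, ← ofReal_integral_eq_lintegral_ofReal hg_int hg_nn]
    exact ENNReal.ofReal_le_ofReal hgε
  have key : ∀ t ∈ Set.Ioo (0:ℝ) δ0,
      ENNReal.ofReal (ε - C * t ^ ((m:ℝ))⁻¹) ≤ ν {a | t < f a} := by
    intro t ht
    have hCt : 0 ≤ C * t ^ ((m:ℝ))⁻¹ :=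
      mul_nonneg hC0.le (Real.rpow_nonneg ht.1.le _)
    rw [ENNReal.ofReal_sub _ hCt, tsub_le_iff_right]
    have hsm : MeasurableSet {a | t < f a} := (isOpen_lt continuous_const hf_cont).measurableSet
    have hcompl : {a | t < f a}ᶜ = {a | f a ≤ t} := by ext x; simp [not_lt]
    calc ENNReal.ofReal ε ≤ ∫⁻ x, G x ∂μ := htot
      _ = (∫⁻ x in {a | t < f a}, G x ∂μ) + ∫⁻ x in {a | f a ≤ t}, G x ∂μ := by
          rw [← hcompl, lintegral_add_compl _ hsm]
      _ ≤ ν {a | t < f a} + ENNReal.ofReal (C * t ^ ((m:ℝ))⁻¹) := by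
          have e1 : ∫⁻ x in {a | f a ≤ t}, G x ∂μ ≤ ∫⁻ _ in {a | f a ≤ t}, (1:ℝ≥0∞) ∂μ := by
            refine lintegral_mono_ae ?_
            filter_upwards [Filter.Eventually.filter_mono
              (ae_mono Measure.restrict_le_self) hg01] with x hx
            exact ENNReal.ofReal_le_one.2 hx.2
          have e2 : (∫⁻ _ in {a | f a ≤ t}, (1:ℝ≥0∞) ∂μ) = μ {a | f a ≤ t} :=
            setLIntegral_one _
          gcongr
          · rw [hν, withDensity_apply _ hsm]
          · exact le_trans e1 (e2.le.trans (keyμ t ht))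
  calc ENNReal.ofReal (∫ t in Set.Ioo (0:ℝ) δ0, (ε - C * t ^ ((m:ℝ))⁻¹))
      ≤ ∫⁻ t in Set.Ioo (0:ℝ) δ0, ENNReal.ofReal (ε - C * t ^ ((m:ℝ))⁻¹) := by
        have hcont : Continuous fun t : ℝ => ε - C * t ^ ((m:ℝ))⁻¹ :=
          continuous_const.sub (continuous_const.mul (Real.continuous_rpow_const (by positivity)))
        have hint : IntegrableOn (fun t : ℝ => ε - C * t ^ ((m:ℝ))⁻¹) (Set.Ioo 0 δ0) volume :=
          (hcont.integrableOn_Ioc).mono_set Set.Ioo_subset_Ioc_self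
        have hnn : 0 ≤ᵐ[volume.restrict (Set.Ioo (0:ℝ) δ0)]
            fun t : ℝ => ε - C * t ^ ((m:ℝ))⁻¹ := by
          refine ae_restrict_of_forall_mem measurableSet_Ioo fun t ht => ?_
          have h1 : t ^ ((m:ℝ))⁻¹ ≤ δ0 ^ ((m:ℝ))⁻¹ :=
            Real.rpow_le_rpow ht.1.le ht.2.le (by positivity)
          have h2 : C * t ^ ((m:ℝ))⁻¹ ≤ ε := by
            calc C * t ^ ((m:ℝ))⁻¹ ≤ C * δ0 ^ ((m:ℝ))⁻¹ := by gcongr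
              _ = ε := by rw [hδ0r]; field_simp
          simp only [Pi.zero_apply]; linarith
        rw [ofReal_integral_eq_lintegral_ofReal hint hnn]
    _ ≤ ∫⁻ t in Set.Ioo (0:ℝ) δ0, ν {a | t < f a} := by
        exact setLIntegral_mono' measurableSet_Ioo key
    _ ≤ ∫⁻ t in Set.Ioi (0:ℝ), ν {a | t < f a} := lintegral_mono_set Set.Ioo_subset_Ioi_self
    _ = ENNReal.ofReal (∫ x in cube n 1, f x * g x) := by rw [step1, step2]

/-- For a nonconstant polynomial `p` of degree `d`, an admissible multi-index `α` for `p`,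
and the constant `C` from the volume bound for sublevel sets, one has
`Λ_{|p|}(ε) ≥ (C^{-|α|}/(1+|α|)) ε^{|α|+1}` whenever `0 < ε < |p_α|^{1/|α|} C/(4d)`. -/
theorem Lam_abs_poly_lower_bound {n : ℕ} (p : MvPolynomial (Fin n) ℝ) (d : ℕ)
    (hpd : p.totalDegree = d) (hd : 0 < d)
    (α : Fin n →₀ ℕ) (hα : Admissible p α) (C : ℝ) (hC2 : 2 ≤ C)
    (hC : ∀ δ : ℝ, 0 < δ → δ < |coeff α p| / (4 * d : ℝ) ^ (∑ i, α i) →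
      volume (sublevel p δ ∩ cube n 1) ≤
        ENNReal.ofReal (C * δ ^ (((∑ i, α i : ℕ) : ℝ))⁻¹))
    (ε : ℝ) (hε : 0 < ε)
    (hε' : ε < |coeff α p| ^ (((∑ i, α i : ℕ) : ℝ))⁻¹ * C / (4 * d)) :
    ENNReal.ofReal ((C ^ (∑ i, α i))⁻¹ / (1 + (∑ i, α i : ℕ) : ℝ) * ε ^ ((∑ i, α i) + 1)) ≤
      Lam n (fun x => |eval x p|) ε := by
  set m : ℕ := ∑ i, α i with hmdef
  have hm1 : 1 ≤ m := one_le_sum_of_admissible hpd hd hα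
  have hmR : (0:ℝ) < (m:ℝ) := by exact_mod_cast hm1
  have hC0 : (0:ℝ) < C := lt_of_lt_of_le two_pos hC2
  have hpα : (0:ℝ) < |coeff α p| := abs_pos.2 hα.1
  have h4d : (0:ℝ) < 4 * d := by positivity
  set δ0 : ℝ := (ε/C)^m with hδ0
  have hδ0pos : 0 < δ0 := pow_pos (div_pos hε hC0) m
  have hδ0r : δ0 ^ ((m:ℝ))⁻¹ = ε / C := by
    rw [hδ0, ← Real.rpow_natCast (ε/C) m, ← Real.rpow_mul (div_pos hε hC0).le]
    rw [mul_inv_cancel₀ hmR.ne', Real.rpow_one]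
  -- δ0 is below the threshold for the volume bound
  have hδ0B : δ0 < |coeff α p| / (4 * d : ℝ) ^ m := by
    have h1 : ε / C < |coeff α p| ^ ((m:ℝ))⁻¹ / (4 * d) := by
      rw [div_lt_div_iff₀ hC0 h4d]
      calc ε * (4 * d) < (|coeff α p| ^ ((m:ℝ))⁻¹ * C / (4 * d)) * (4 * d) := by
            exact mul_lt_mul_of_pos_right hε' h4d
        _ = |coeff α p| ^ ((m:ℝ))⁻¹ * C := by field_simp
    have h2 : δ0 < (|coeff α p| ^ ((m:ℝ))⁻¹ / (4 * d)) ^ m := by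
      rw [hδ0]
      exact pow_lt_pow_left₀ h1 (div_pos hε hC0).le (by omega)
    have h3 : (|coeff α p| ^ ((m:ℝ))⁻¹ / (4 * d)) ^ m = |coeff α p| / (4 * d : ℝ) ^ m := by
      rw [div_pow]
      congr 1
      rw [← Real.rpow_natCast (|coeff α p| ^ ((m:ℝ))⁻¹) m, ← Real.rpow_mul (abs_nonneg _)]
      rw [inv_mul_cancel₀ hmR.ne', Real.rpow_one]
    rwa [h3] at h2
  have keyμ := restrict_closed_sublevel_le p m C δ0 _ hδ0B hC
  rw [Lam]
  refine le_sInf ?_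
  rintro b ⟨g, ⟨hgm, hg01, hgε⟩, rfl⟩
  have := lintegral_layercake_bound p m C hC0 δ0 keyμ ε hδ0r g hgm hg01 hgε
  rw [integral_lower_bound_eq m hm1 C ε hC0 hε] at this
  exact this
end

section
/- There is no polynomial p in two real variables such that \{(x,y) \in \mathbb{R}^2 : p(x,y) \geq 0\} = \{(x,y) \in \mathbb{R}^2 : x \geq 0 \text{ and } y \geq 0\}. That is, the closed positive quadrant E_1 in \mathbb{R}^2 is not a principal semi-algebraic set. -/
/-!
For `t ≥ 0` the slice `s ↦ p(t, s)` is nonnegative exactly on `[0, ∞)`, so by continuity it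
vanishes on the frontier point `s = 0`. Hence `t ↦ p(t, 0)` is a one-variable polynomial with
infinitely many roots, so it vanishes identically; but then `p(-1, 0) = 0 ≥ 0` although `(-1, 0)`
lies outside the quadrant.
-/

open MvPolynomial

namespace MvPolynomial

variable {R σ : Type*} [CommRing R]

noncomputable def restrictLine (p : MvPolynomial σ R) (a v : σ → R) : Polynomial R :=
  aeval (fun i => Polynomial.C (a i) + Polynomial.C (v i) * Polynomial.X) p

theorem eval_restrictLine (p : MvPolynomial σ R) (a v : σ → R) (t : R) :
    (p.restrictLine a v).eval t = eval (a + t • v) p := by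
  rw [restrictLine, aeval_def, polynomial_eval_eval₂]
  congr 1
  · ext r; simp
  · funext i
    simp only [Polynomial.eval_add, Polynomial.eval_mul, Polynomial.eval_C, Polynomial.eval_X,
      Pi.add_apply, Pi.smul_apply, smul_eq_mul, mul_comm]

theorem eval_line_eq_zero_of_infinite [IsDomain R] (p : MvPolynomial σ R) (a v : σ → R)
    {s : Set R} (hs : s.Infinite) (h : ∀ t ∈ s, eval (a + t • v) p = 0) (t : R) :
    eval (a + t • v) p = 0 := by
  have : p.restrictLine a v = 0 :=
    Polynomial.eq_zero_of_infinite_isRoot _ <| hs.mono fun t ht => by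
      simp [Polynomial.IsRoot, eval_restrictLine, h t ht]
  rw [← eval_restrictLine, this, Polynomial.eval_zero]

end MvPolynomial

/-- The closed positive quadrant in `ℝ²` is not a principal semi-algebraic set: no single
polynomial inequality `p(x,y) ≥ 0` carves out `{(x,y) : x ≥ 0 and y ≥ 0}`. -/
theorem quadrant_not_principal :
    ¬ ∃ p : MvPolynomial (Fin 2) ℝ,
      {x : Fin 2 → ℝ | 0 ≤ eval x p} = {x : Fin 2 → ℝ | 0 ≤ x 0 ∧ 0 ≤ x 1} := by
  rintro ⟨p, hp⟩
  have hmem (x : Fin 2 → ℝ) : 0 ≤ eval x p ↔ 0 ≤ x 0 ∧ 0 ≤ x 1 := Set.ext_iff.1 hp x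
  have hray : ∀ t ∈ Set.Ici (0 : ℝ), eval (0 + t • ![1, 0]) p = 0 := by
    intro t (ht : 0 ≤ t)
    have hslice : {s : ℝ | 0 ≤ eval ![t, s] p} = Set.Ici 0 := by
      ext s; simp [hmem, ht]
    have hcont : Continuous fun s : ℝ => eval ![t, s] p :=
      (continuous_eval p).comp (by fun_prop)
    have h0 : (0 : ℝ) ∈ frontier {s : ℝ | 0 ≤ eval ![t, s] p} := by
      rw [hslice, frontier_Ici]; rfl
    simpa using (frontier_le_subset_eq continuous_const hcont h0).symm
  have hneg := eval_line_eq_zero_of_infinite p 0 ![1, 0] (Set.Ici_infinite 0) hray (-1)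
  have hquad := (hmem _).1 hneg.ge
  norm_num at hquad
end

section
/- Let \mu denote Lebesgue area measure restricted to the closed unit disk in \mathbb{R}^2 and let E_2 = \{(x,y) \in \mathbb{R}^2 : xy \geq 0\}. If g is a measurable function on the closed unit disk with 0 \leq g \leq 1 \mu-a.e. and \int_{E_2} x^i y^j\, d\mu = \int x^i y^j\, g\, d\mu for all nonnegative integers i, j with i + j \leq 2, then g = \chi_{E_2} \mu-almost everywhere, where \chi_{E_2} denotes the characteristic function of E_2. -/
open MeasureTheory

/-- Lebesgue area measure restricted to the closed unit disk in `ℝ²`. -/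
noncomputable def diskMeasure : Measure (Fin 2 → ℝ) :=
  volume.restrict {x : Fin 2 → ℝ | (x 0) ^ 2 + (x 1) ^ 2 ≤ 1}

/-- The union of the closed first and third quadrants, `E₂ = {(x,y) : xy ≥ 0}`. -/
def E2 : Set (Fin 2 → ℝ) := {x : Fin 2 → ℝ | 0 ≤ x 0 * x 1}

lemma measurableSet_E2 : MeasurableSet E2 :=
  measurableSet_le measurable_const ((measurable_pi_apply 0).mul (measurable_pi_apply 1))

lemma disk_subset_ball :
    {x : Fin 2 → ℝ | (x 0) ^ 2 + (x 1) ^ 2 ≤ 1} ⊆ Metric.closedBall 0 1 := by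
  intro x hx
  simp only [Set.mem_setOf_eq] at hx
  simp only [Metric.mem_closedBall, dist_zero_right]
  rw [pi_norm_le_iff_of_nonneg zero_le_one]
  intro i
  rw [Real.norm_eq_abs]
  have hi : i = 0 ∨ i = 1 := by omega
  rcases hi with rfl | rfl
  · nlinarith [sq_nonneg (x 1), abs_nonneg (x 0), sq_abs (x 0)]
  · nlinarith [sq_nonneg (x 0), abs_nonneg (x 1), sq_abs (x 1)]

instance : IsFiniteMeasure diskMeasure := by
  constructor
  rw [diskMeasure, Measure.restrict_apply_univ]
  exact lt_of_le_of_lt (measure_mono disk_subset_ball)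
    (isCompact_closedBall (0 : Fin 2 → ℝ) 1).measure_lt_top

lemma null_axes : diskMeasure {x : Fin 2 → ℝ | x 0 * x 1 = 0} = 0 := by
  have h0 : (volume : Measure (Fin 2 → ℝ)) {x | x 0 = 0} = 0 := by
    rw [volume_pi]
    exact Measure.pi_hyperplane (fun _ => volume) 0 0
  have h1 : (volume : Measure (Fin 2 → ℝ)) {x | x 1 = 0} = 0 := by
    rw [volume_pi]
    exact Measure.pi_hyperplane (fun _ => volume) 1 0
  have hsub : {x : Fin 2 → ℝ | x 0 * x 1 = 0} ⊆ {x | x 0 = 0} ∪ {x | x 1 = 0} := by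
    intro x hx
    rcases mul_eq_zero.mp hx with h | h
    · exact Or.inl h
    · exact Or.inr h
  have : (volume : Measure (Fin 2 → ℝ)) {x : Fin 2 → ℝ | x 0 * x 1 = 0} = 0 :=
    measure_mono_null hsub (measure_union_null h0 h1)
  exact le_antisymm (le_trans (Measure.restrict_le_self _) this.le) bot_le

/-- The principal semi-algebraic set `E₂ = {xy ≥ 0}` is determined among shade functions
with values in `[0,1]` on the closed unit disk by its power moments of degree at most 2. -/
theorem E2_determined_by_moments (g : (Fin 2 → ℝ) → ℝ) (hg : Measurable g)
    (hg01 : ∀ᵐ x ∂diskMeasure, 0 ≤ g x ∧ g x ≤ 1)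
    (hmom : ∀ i j : ℕ, i + j ≤ 2 →
      ∫ x in E2, (x 0) ^ i * (x 1) ^ j ∂diskMeasure =
        ∫ x, (x 0) ^ i * (x 1) ^ j * g x ∂diskMeasure) :
    g =ᵐ[diskMeasure] E2.indicator 1 := by
  set μ := diskMeasure with hμ
  -- a.e. membership in the disk
  have hdiskmeas : MeasurableSet {x : Fin 2 → ℝ | (x 0) ^ 2 + (x 1) ^ 2 ≤ 1} :=
    measurableSet_le (((measurable_pi_apply 0).pow_const 2).add
      ((measurable_pi_apply 1).pow_const 2)) measurable_const
  have hmem : ∀ᵐ x ∂μ, (x 0) ^ 2 + (x 1) ^ 2 ≤ 1 := by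
    rw [hμ, diskMeasure]
    exact ae_restrict_mem hdiskmeas
  have hxy_bound : ∀ᵐ x ∂μ, |x 0 * x 1| ≤ 1 := by
    filter_upwards [hmem] with x hx
    rw [abs_mul]
    nlinarith [sq_nonneg (x 0), sq_nonneg (x 1), abs_nonneg (x 0), abs_nonneg (x 1),
      sq_abs (x 0), sq_abs (x 1)]
  -- the functions
  set p : (Fin 2 → ℝ) → ℝ := fun x => x 0 * x 1 * E2.indicator 1 x with hp
  set q : (Fin 2 → ℝ) → ℝ := fun x => x 0 * x 1 * g x with hq
  have hmeasxy : Measurable fun x : Fin 2 → ℝ => x 0 * x 1 :=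
    (measurable_pi_apply 0).mul (measurable_pi_apply 1)
  have hmeasp : Measurable p :=
    hmeasxy.mul ((measurable_const (a := (1:ℝ))).indicator measurableSet_E2)
  have hmeasq : Measurable q := hmeasxy.mul hg
  have hintp : Integrable p μ := by
    refine ⟨hmeasp.aestronglyMeasurable, HasFiniteIntegral.of_bounded (C := 1) ?_⟩
    filter_upwards [hxy_bound] with x hx
    rw [hp]
    by_cases hxE : x ∈ E2
    · simp only [Set.indicator_of_mem hxE, Pi.one_apply, mul_one, Real.norm_eq_abs]
      exact hx
    · simp [Set.indicator_of_notMem hxE]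
  have hintq : Integrable q μ := by
    refine ⟨hmeasq.aestronglyMeasurable, HasFiniteIntegral.of_bounded (C := 1) ?_⟩
    filter_upwards [hxy_bound, hg01] with x hx ⟨hg0, hg1⟩
    rw [hq, Real.norm_eq_abs, abs_mul]
    calc |x 0 * x 1| * |g x| ≤ 1 * 1 := by
          apply mul_le_mul hx _ (abs_nonneg _) zero_le_one
          rw [abs_le]; constructor <;> linarith
      _ = 1 := by ring
  -- ∫ p = ∫ q from the (1,1) moment
  have hpq : ∫ x, p x ∂μ = ∫ x, q x ∂μ := by
    have h11 := hmom 1 1 (by norm_num)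
    simp only [pow_one] at h11
    rw [hp, hq]
    have : ∫ x, x 0 * x 1 * E2.indicator 1 x ∂μ = ∫ x in E2, x 0 * x 1 ∂μ := by
      rw [← integral_indicator measurableSet_E2]
      congr 1
      ext x
      by_cases hxE : x ∈ E2
      · simp [Set.indicator_of_mem hxE]
      · simp [Set.indicator_of_notMem hxE]
    rw [this, h11]
  -- f = p - q is nonnegative a.e. and has zero integral
  have hintf : Integrable (fun x => p x - q x) μ := hintp.sub hintq
  have hzero : ∫ x, (p x - q x) ∂μ = 0 := by
    rw [integral_sub hintp hintq, hpq, sub_self]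
  have hnonneg : 0 ≤ᵐ[μ] fun x => p x - q x := by
    filter_upwards [hg01] with x ⟨hg0, hg1⟩
    simp only [Pi.zero_apply, hp, hq]
    rw [← mul_sub]
    by_cases hxE : x ∈ E2
    · have hx0 : 0 ≤ x 0 * x 1 := hxE
      rw [Set.indicator_of_mem hxE]
      simp only [Pi.one_apply]
      exact mul_nonneg hx0 (by linarith)
    · have hx0 : x 0 * x 1 ≤ 0 := le_of_not_ge hxE
      rw [Set.indicator_of_notMem hxE]
      nlinarith
  have hae0 : (fun x => p x - q x) =ᵐ[μ] 0 :=
    (integral_eq_zero_iff_of_nonneg_ae hnonneg hintf).mp hzero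
  have haxes : ∀ᵐ x ∂μ, x 0 * x 1 ≠ 0 := by
    rw [ae_iff]
    convert null_axes using 2
    ext x
    simp only [Set.mem_setOf_eq, not_not, mul_eq_zero]
  filter_upwards [hae0, haxes] with x hx hne
  simp only [Pi.zero_apply, hp, hq, ← mul_sub] at hx
  rcases mul_eq_zero.mp hx with h | h
  · exact absurd h hne
  · linarith [sub_eq_zero.mp h]
end

section
/- Let f, g : \mathbb{D} \to [0,1] be measurable functions. Then for every R > 1 and all z, w \in \mathbb{C} with |z| \geq R and |w| \geq R, |E_f(z,\bar{w}) - E_g(z,\bar{w})| \leq C_3(R)\, \|f - g\|_1, where C_3(R) = (2/(\pi (R-1)^2))\, \exp( 4/(\pi (R-1)^2) ) and \|f-g\|_1 = \int_{\mathbb{D}} |f - g|\, dA. -/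
/-!
The exponent of `E_f(z, w̄)` is `-1/π` times the integral of `f` against the kernel
`1/((ζ - z)(ζ̄ - w̄))`, which is bounded by `1/(R-1)²` on the disk. Hence both exponents have
modulus at most `1/(R-1)²` and differ by at most `‖f - g‖₁/(π(R-1)²)`. On the closed ball of
radius `M` the exponential is `exp M`-Lipschitz, and `exp (1/(R-1)²) ≤ exp (4/(π(R-1)²))`
because `π ≤ 4`.
-/

open MeasureTheory

/-- The polarized exponential transform
`E_f(z, w̄) = exp(-(1/π) ∫_𝔻 f(ζ)/((ζ-z)(ζ̄-w̄)) dA(ζ))` of a shade function `f` on the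
unit disk. -/
noncomputable def Epol (f : ℂ → ℝ) (z w : ℂ) : ℂ :=
  Complex.exp (-(1 / Real.pi : ℝ) *
    ∫ ζ in Metric.ball (0 : ℂ) 1,
      (f ζ : ℂ) / ((ζ - z) * ((starRingEnd ℂ) ζ - (starRingEnd ℂ) w)))

open Set

theorem Complex.norm_exp_sub_exp_le {a b : ℂ} {M : ℝ} (ha : ‖a‖ ≤ M) (hb : ‖b‖ ≤ M) :
    ‖exp a - exp b‖ ≤ Real.exp M * ‖a - b‖ := by
  refine (convex_closedBall (0 : ℂ) M).norm_image_sub_le_of_norm_deriv_le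
    (fun x _ => differentiable_exp x) (fun x hx => ?_)
    (mem_closedBall_zero_iff.2 hb) (mem_closedBall_zero_iff.2 ha)
  rw [deriv_exp, norm_exp]
  exact Real.exp_le_exp.2 ((re_le_norm x).trans (mem_closedBall_zero_iff.1 hx))

theorem Complex.norm_exp_mul_sub_exp_mul_le {c a b : ℂ} {M : ℝ} (ha : ‖a‖ ≤ M)
    (hb : ‖b‖ ≤ M) :
    ‖exp (c * a) - exp (c * b)‖ ≤ Real.exp (‖c‖ * M) * (‖c‖ * ‖a - b‖) := by
  rw [← norm_mul, mul_sub]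
  refine norm_exp_sub_exp_le ?_ ?_ <;> rw [norm_mul] <;> gcongr

theorem norm_ofReal_div_le {x δ : ℝ} {D : ℂ} (hδ : 0 < δ) (hD : δ ≤ ‖D‖) :
    ‖(x : ℂ) / D‖ ≤ |x| / δ := by
  rw [norm_div, Complex.norm_real, Real.norm_eq_abs]
  exact div_le_div_of_nonneg_left (abs_nonneg x) hδ hD

section DivisionByBoundedBelow

variable {α : Type*} [MeasurableSpace α] {μ : Measure α} {D : α → ℂ} {δ : ℝ}

theorem norm_integral_ofReal_div_le [IsFiniteMeasure μ] {f : α → ℝ} (hδ : 0 < δ)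
    (hD : ∀ᵐ x ∂μ, δ ≤ ‖D x‖) (hf : ∀ᵐ x ∂μ, |f x| ≤ 1) :
    ‖∫ x, (f x : ℂ) / D x ∂μ‖ ≤ μ.real univ / δ := by
  refine (norm_integral_le_of_norm_le_const (C := 1 / δ) ?_).trans_eq (by ring)
  filter_upwards [hD, hf] with x hDx hfx
  exact (norm_ofReal_div_le hδ hDx).trans (div_le_div_of_nonneg_right hfx hδ.le)

theorem norm_integral_ofReal_div_sub_le {f g : α → ℝ} (hf : Integrable f μ)
    (hg : Integrable g μ) (hDm : AEMeasurable D μ) (hδ : 0 < δ)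
    (hD : ∀ᵐ x ∂μ, δ ≤ ‖D x‖) :
    ‖∫ x, (f x : ℂ) / D x ∂μ - ∫ x, (g x : ℂ) / D x ∂μ‖ ≤ (∫ x, |f x - g x| ∂μ) / δ := by
  have hinv : ∀ᵐ x ∂μ, ‖(D x)⁻¹‖ ≤ δ⁻¹ := by
    filter_upwards [hD] with x hDx
    rw [norm_inv]
    exact inv_anti₀ hδ hDx
  have hint {h : α → ℝ} (hh : Integrable h μ) : Integrable (fun x => (h x : ℂ) / D x) μ :=
    hh.ofReal.mul_bdd hDm.inv.aestronglyMeasurable hinv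
  rw [← integral_sub (hint hf) (hint hg), ← integral_div]
  refine norm_integral_le_of_norm_le ((hf.sub hg).abs.div_const δ) ?_
  filter_upwards [hD] with x hDx
  rw [← sub_div, ← Complex.ofReal_sub]
  exact norm_ofReal_div_le hδ hDx

end DivisionByBoundedBelow

theorem sub_le_norm_sub_of_norm_le {E : Type*} [SeminormedAddCommGroup E] {x y : E} {r R : ℝ}
    (hx : ‖x‖ ≤ r) (hy : R ≤ ‖y‖) : R - r ≤ ‖x - y‖ :=
  ((sub_le_sub hy hx).trans (norm_sub_norm_le y x)).trans_eq (norm_sub_rev y x)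

theorem sq_sub_le_norm_mul_conj_sub {ζ z w : ℂ} {r R : ℝ} (hrR : r ≤ R) (hζ : ‖ζ‖ ≤ r)
    (hz : R ≤ ‖z‖) (hw : R ≤ ‖w‖) :
    (R - r) ^ 2 ≤ ‖(ζ - z) * ((starRingEnd ℂ) ζ - (starRingEnd ℂ) w)‖ := by
  rw [← map_sub, norm_mul, Complex.norm_conj, sq]
  exact mul_le_mul (sub_le_norm_sub_of_norm_le hζ hz) (sub_le_norm_sub_of_norm_le hζ hw)
    (sub_nonneg.2 hrR) (norm_nonneg _)

/-- Lipschitz continuity of the polarized exponential transform: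
`|E_f(z,w̄) - E_g(z,w̄)| ≤ C₃(R) ‖f - g‖₁` for `|z|, |w| ≥ R > 1`, where
`C₃(R) = (2/(π(R-1)²)) exp(4/(π(R-1)²))`. -/
theorem Epol_diff_bound (f g : ℂ → ℝ) (hf : Measurable f) (hg : Measurable g)
    (hf01 : ∀ z ∈ Metric.ball (0 : ℂ) 1, f z ∈ Set.Icc (0 : ℝ) 1)
    (hg01 : ∀ z ∈ Metric.ball (0 : ℂ) 1, g z ∈ Set.Icc (0 : ℝ) 1)
    (R : ℝ) (hR : 1 < R) (z w : ℂ)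
    (hz : R ≤ ‖z‖) (hw : R ≤ ‖w‖) :
    ‖Epol f z w - Epol g z w‖ ≤
      2 / (Real.pi * (R - 1) ^ 2) * Real.exp (4 / (Real.pi * (R - 1) ^ 2)) *
        ∫ ζ in Metric.ball (0 : ℂ) 1, |f ζ - g ζ| := by
  unfold Epol
  set μ := volume.restrict (Metric.ball (0 : ℂ) 1)
  have : IsFiniteMeasure μ := isFiniteMeasure_restrict.2 measure_ball_lt_top.ne
  have hμ : μ.real univ = Real.pi := by simp [μ, measureReal_def]
  have hδ : 0 < (R - 1) ^ 2 := pow_pos (sub_pos.2 hR) 2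
  have hD : ∀ᵐ ζ ∂μ, (R - 1) ^ 2 ≤ ‖(ζ - z) * ((starRingEnd ℂ) ζ - (starRingEnd ℂ) w)‖ :=
    ae_restrict_of_forall_mem measurableSet_ball fun ζ hζ =>
      sq_sub_le_norm_mul_conj_sub hR.le (mem_ball_zero_iff.1 hζ).le hz hw
  have hbdd {h : ℂ → ℝ} (h01 : ∀ ζ ∈ Metric.ball (0 : ℂ) 1, h ζ ∈ Icc (0 : ℝ) 1) :
      ∀ᵐ ζ ∂μ, |h ζ| ≤ 1 :=
    ae_restrict_of_forall_mem measurableSet_ball fun ζ hζ =>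
      abs_le.2 ⟨by linarith [(h01 ζ hζ).1], (h01 ζ hζ).2⟩
  have hc : ‖-((1 / Real.pi : ℝ) : ℂ)‖ = 1 / Real.pi := by
    rw [norm_neg, Complex.norm_real, Real.norm_of_nonneg (by positivity)]
  have hexponent : 1 / Real.pi * (Real.pi / (R - 1) ^ 2) ≤ 4 / (Real.pi * (R - 1) ^ 2) := by
    rw [div_mul_div_comm, one_mul]
    exact div_le_div_of_nonneg_right Real.pi_le_four (by positivity)
  calc _ ≤ Real.exp (1 / Real.pi * (Real.pi / (R - 1) ^ 2)) * (1 / Real.pi *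
          ‖(∫ ζ, (f ζ : ℂ) / ((ζ - z) * ((starRingEnd ℂ) ζ - (starRingEnd ℂ) w)) ∂μ) -
            ∫ ζ, (g ζ : ℂ) / ((ζ - z) * ((starRingEnd ℂ) ζ - (starRingEnd ℂ) w)) ∂μ‖) :=
        (Complex.norm_exp_mul_sub_exp_mul_le
          (hμ ▸ norm_integral_ofReal_div_le hδ hD (hbdd hf01))
          (hμ ▸ norm_integral_ofReal_div_le hδ hD (hbdd hg01))).trans_eq (by rw [hc])
    _ ≤ Real.exp (4 / (Real.pi * (R - 1) ^ 2)) *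
          (1 / Real.pi * ((∫ ζ, |f ζ - g ζ| ∂μ) / (R - 1) ^ 2)) := by
        gcongr
        exact norm_integral_ofReal_div_sub_le (.of_bound hf.aestronglyMeasurable 1 (hbdd hf01))
          (.of_bound hg.aestronglyMeasurable 1 (hbdd hg01)) (by fun_prop) hδ hD
    _ ≤ _ := by
        have hL : 0 ≤ ∫ ζ, |f ζ - g ζ| ∂μ := integral_nonneg fun ζ => abs_nonneg (f ζ - g ζ)
        field_simp
        gcongr
        linarith
end

section
/- For every a \in \mathbb{C}, r > 0, and z \in \mathbb{C} with |z - a| > r, one has \exp( -(1/\pi) \int_{D(a,r)} dA(\zeta) / |\zeta - z|^2 ) = 1 - r^2/|z-a|^2, where D(a,r) = \{\zeta \in \mathbb{C} : |\zeta - a| < r\}. -/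
/-!
In polar coordinates about `a`, the integral becomes `∫₀ʳ 2πs · m(s) ds`, where `m(s)` is the
mean of `1/|ζ - z|²` over the circle `|ζ - a| = s`. On that circle `(|z-a|² - s²)/|ζ - z|²` is the
Poisson kernel, i.e. the real part of the Herglotz kernel `ζ ↦ (z - a + (ζ - a))/(z - ζ)`, which is
holomorphic on `|ζ - a| < |z - a|` and equals `1` at `a`. The mean value property thus gives
`m(s) = 1/(|z-a|² - s²)`, and `∫₀ʳ 2πs/(|z-a|² - s²) ds = -π log(1 - r²/|z-a|²)`.
-/

open MeasureTheory Metric Set Real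

theorem circleAverage_poissonKernel_eq_one {c d : ℂ} {s : ℝ} (hs : |s| < ‖d - c‖) :
    circleAverage (poissonKernel c · d) c s = 1 := by
  have hd : ∀ w ∈ closedBall c |s|, d - c - (w - c) ≠ 0 := fun w hw h => by
    rw [sub_sub_sub_cancel_right, sub_eq_zero] at h
    rw [mem_closedBall, ← h, dist_eq_norm] at hw
    linarith
  have hK : DifferentiableOn ℂ (herglotzRieszKernel c · d) (closedBall c |s|) := by
    simp only [herglotzRieszKernel_def]
    exact DifferentiableOn.div (by fun_prop) (by fun_prop) hd
  have hcd : d - c ≠ 0 := by simpa using hd c (mem_closedBall_self (abs_nonneg s))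
  calc circleAverage (poissonKernel c · d) c s
      = circleAverage (Complex.reCLM ∘ (herglotzRieszKernel c · d)) c s := by
        simp only [poissonKernel_eq_re_herglotzRieszKernel]; rfl
    _ = (herglotzRieszKernel c c d).re := by
        rw [Complex.reCLM.circleAverage_comp_comm
          (hK.continuousOn.mono sphere_subset_closedBall).circleIntegrable',
          (hK.diffContOnCl_ball subset_rfl).circleAverage, Complex.reCLM_apply]
    _ = 1 := by simp [herglotzRieszKernel_def, hcd]

theorem circleAverage_inv_norm_sub_sq {c d : ℂ} {s : ℝ} (hs : |s| < ‖d - c‖) :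
    circleAverage (fun w => (‖w - d‖ ^ 2)⁻¹) c s = (‖d - c‖ ^ 2 - s ^ 2)⁻¹ := by
  have hsphere : EqOn (poissonKernel c · d) (fun w => (‖d - c‖ ^ 2 - s ^ 2) • (‖w - d‖ ^ 2)⁻¹)
      (sphere c |s|) := fun w hw => by
    rw [mem_sphere, dist_eq_norm] at hw
    simp only [poissonKernel_def, hw, sq_abs, sub_sub_sub_cancel_right, norm_sub_rev d w,
      div_eq_mul_inv, smul_eq_mul]
  have h := circleAverage_poissonKernel_eq_one hs
  rw [circleAverage_congr_sphere hsphere, circleAverage_fun_smul, smul_eq_mul] at h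
  exact eq_inv_of_mul_eq_one_right h

theorem Complex.polarCoord_symm_eq_circleMap (p : ℝ × ℝ) :
    Complex.polarCoord.symm p = circleMap 0 p.1 p.2 := by
  simp [circleMap, Complex.exp_mul_I]

section Polar

variable {E : Type*} [NormedAddCommGroup E] [NormedSpace ℝ E]

theorem setIntegral_Ioo_neg_pi_pi_comp_circleMap (f : ℂ → E) (c : ℂ) (s : ℝ) :
    ∫ θ in Ioo (-π) π, f (circleMap c s θ) = (2 * π) • circleAverage f c s := by
  have hper : Function.Periodic (fun θ => f (circleMap c s θ)) (2 * π) :=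
    fun θ => by simp [periodic_circleMap c s θ]
  have hshift := hper.intervalIntegral_add_eq (-π) 0
  rw [neg_add_eq_sub, two_mul, add_sub_cancel_right, zero_add, ← two_mul] at hshift
  rw [circleAverage_def, smul_inv_smul₀ (by positivity), ← integral_Ioc_eq_integral_Ioo,
    ← intervalIntegral.integral_of_le (by linarith [pi_pos]), hshift]

theorem setIntegral_ball_zero_eq_setIntegral_circleAverage {f : ℂ → E} {R : ℝ}
    (hf : ContinuousOn f (closedBall 0 R)) :
    ∫ w in ball 0 R, f w = ∫ s in Ioo 0 R, (2 * π * s) • circleAverage f 0 s := by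
  set S : Set (ℝ × ℝ) := Ioo 0 R ×ˢ Ioo (-π) π
  have hS : MeasurableSet S := measurableSet_Ioo.prod measurableSet_Ioo
  have hpolar : ∀ p ∈ polarCoord.target,
      p.1 • (ball 0 R).indicator f (Complex.polarCoord.symm p) =
        S.indicator (fun p => p.1 • f (circleMap 0 p.1 p.2)) p := by
    rintro ⟨s, θ⟩ ⟨hs, hθ⟩
    simp only [mem_Ioi] at hs
    rw [Complex.polarCoord_symm_eq_circleMap]
    simp [S, indicator, abs_of_pos hs, hs, hθ]
  have hint : IntegrableOn (fun p : ℝ × ℝ => p.1 • f (circleMap 0 p.1 p.2)) S := by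
    refine (ContinuousOn.integrableOn_compact (isCompact_Icc.prod isCompact_Icc) ?_).mono_set
      (prod_mono Ioo_subset_Icc_self Ioo_subset_Icc_self)
    refine continuousOn_fst.smul (hf.comp (by fun_prop) fun p hp => ?_)
    simp [abs_of_nonneg hp.1.1, hp.1.2]
  calc ∫ w in ball 0 R, f w
      = ∫ p in polarCoord.target, p.1 • (ball 0 R).indicator f (Complex.polarCoord.symm p) := by
        rw [← integral_indicator measurableSet_ball, ← Complex.integral_comp_polarCoord_symm]
    _ = ∫ p in S, p.1 • f (circleMap 0 p.1 p.2) := by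
        rw [setIntegral_congr_fun polarCoord.open_target.measurableSet hpolar,
          setIntegral_indicator hS, inter_eq_self_of_subset_right]
        exact prod_mono Ioo_subset_Ioi_self subset_rfl
    _ = ∫ s in Ioo 0 R, (2 * π * s) • circleAverage f 0 s := by
        rw [Measure.volume_eq_prod, setIntegral_prod _ hint]
        refine setIntegral_congr_fun measurableSet_Ioo fun s _ => ?_
        rw [integral_smul, setIntegral_Ioo_neg_pi_pi_comp_circleMap, smul_smul, mul_comm s]

theorem setIntegral_ball_eq_setIntegral_circleAverage {f : ℂ → E} {c : ℂ} {R : ℝ}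
    (hf : ContinuousOn f (closedBall c R)) :
    ∫ w in ball c R, f w = ∫ s in Ioo 0 R, (2 * π * s) • circleAverage f c s := by
  have hball : (· + c) ⁻¹' ball c R = ball 0 R := by ext; simp [dist_eq_norm]
  have hclosedBall : MapsTo (· + c) (closedBall 0 R) (closedBall c R) := fun w hw => by
    simpa [dist_eq_norm] using hw
  rw [← (measurePreserving_add_right volume c).setIntegral_preimage_emb
    (measurableEmbedding_addRight c), hball,
    setIntegral_ball_zero_eq_setIntegral_circleAverage (f := fun w => f (w + c))
      (hf.comp (by fun_prop) hclosedBall)]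
  simp_rw [circleAverage_map_add_const]

end Polar

theorem setIntegral_Ioo_mul_inv_sq_sub_sq {ρ r : ℝ} (hr : 0 ≤ r) (hρ : r < ρ) :
    ∫ s in Ioo 0 r, s * (ρ ^ 2 - s ^ 2)⁻¹ = -log (1 - r ^ 2 / ρ ^ 2) / 2 := by
  have hden : ∀ s ∈ uIcc 0 r, ρ ^ 2 - s ^ 2 ≠ 0 := fun s hs => by
    rw [uIcc_of_le hr] at hs
    nlinarith [hs.1, hs.2]
  have hderiv : ∀ s ∈ uIcc 0 r,
      HasDerivAt (fun s => -log (ρ ^ 2 - s ^ 2) / 2) (s * (ρ ^ 2 - s ^ 2)⁻¹) s := fun s hs => by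
    refine ((((hasDerivAt_pow 2 s).const_sub (ρ ^ 2)).log (hden s hs)).neg.div_const 2
      ).congr_deriv ?_
    norm_num
    field_simp
  rw [← integral_Ioc_eq_integral_Ioo, ← intervalIntegral.integral_of_le hr,
    intervalIntegral.integral_eq_sub_of_hasDerivAt hderiv
      (ContinuousOn.intervalIntegrable (by fun_prop (disch := assumption)))]
  have hρ0 : 0 < ρ := hr.trans_lt hρ
  rw [zero_pow two_ne_zero, sub_zero, one_sub_div (by positivity),
    log_div (by nlinarith) (by positivity)]
  ring

/-- The diagonal exponential transform of the characteristic function of the disk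
`D(a,r)`, evaluated at a point `z` outside the closed disk, equals `1 - r²/|z-a|²`. -/
theorem Ediag_disk (a : ℂ) (r : ℝ) (hr : 0 < r) (z : ℂ)
    (hz : r < ‖z - a‖) :
    Real.exp (-(1 / Real.pi) * ∫ ζ in Metric.ball a r, 1 / ‖ζ - z‖ ^ 2) =
      1 - r ^ 2 / ‖z - a‖ ^ 2 := by
  have hcont : ContinuousOn (fun ζ : ℂ => 1 / ‖ζ - z‖ ^ 2) (closedBall a r) := by
    have hzb : z ∉ closedBall a r := by rwa [mem_closedBall, dist_eq_norm, not_le]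
    refine ContinuousOn.div continuousOn_const (by fun_prop) fun ζ hζ => ?_
    exact pow_ne_zero 2 (norm_ne_zero_iff.mpr (sub_ne_zero.mpr fun h => hzb (h ▸ hζ)))
  have havg : ∀ s ∈ Ioo 0 r, (2 * π * s) • circleAverage (fun ζ : ℂ => 1 / ‖ζ - z‖ ^ 2) a s =
      2 * π * (s * (‖z - a‖ ^ 2 - s ^ 2)⁻¹) := fun s hs => by
    simp only [one_div]
    rw [circleAverage_inv_norm_sub_sq ((abs_of_pos hs.1).trans_lt (hs.2.trans hz)), smul_eq_mul]
    ring
  have hpos : 0 < 1 - r ^ 2 / ‖z - a‖ ^ 2 := by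
    rw [sub_pos, div_lt_one (pow_pos (hr.trans hz) 2)]
    exact pow_lt_pow_left₀ hz hr.le two_ne_zero
  rw [setIntegral_ball_eq_setIntegral_circleAverage hcont,
    setIntegral_congr_fun measurableSet_Ioo havg, integral_const_mul,
    setIntegral_Ioo_mul_inv_sq_sub_sq hr.le hz]
  field_simp
  exact exp_log hpos
end
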